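/- arXiv:1107.3185 — 5 statements merged into one kernel-verified Lean document; each statement's English description precedes it below -/
import Mathlib

section
/- Let μ, A, B, C ∈ ℝ with B ≠ 0 and suppose μ = (A + C)²/(4B). Then the rescaled normal form X' = Y − X², Y' = Z − X, Z' = −μ − A X − B Y − C Z has a unique equilibrium, located at (X_e, X_e², X_e) with X_e = −(A + C)/(2B). Moreover, the Jacobian matrix of the system, which at a point with first coordinate X equals the 3×3 matrix with rows (−2X, 1, 0), (−1, 0, 1), (−A, −B, −C), has determinant −(2BX + A + C) for every X, and in particular the Jacobian at the unique equilibrium is singular (has a zero eigenvalue). This degenerate equilibrium is the saddle-node bifurcation point of the system. -/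
/-!
At an equilibrium `Y = X²` and `Z = X`, so the last equation reduces to the quadratic
`B X² + (A + C) X + μ = 0`, whose discriminant `(A + C)² - 4 B μ` vanishes exactly when
`μ = (A + C)² / (4 B)`; its double root is `X_e`. The Jacobian determinant is affine in `X`
and vanishes at that same double root.
-/

def rescaledNormalFormEquilibria {K : Type*} [CommRing K] (μ A B C : K) : Set (K × K × K) :=
  {p | p.2.1 - p.1 ^ 2 = 0 ∧ p.2.2 - p.1 = 0 ∧ -μ - A * p.1 - B * p.2.1 - C * p.2.2 = 0}

theorem mem_rescaledNormalFormEquilibria_iff {K : Type*} [CommRing K] {μ A B C X Y Z : K} :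
    (X, Y, Z) ∈ rescaledNormalFormEquilibria μ A B C ↔
      Y = X ^ 2 ∧ Z = X ∧ B * (X * X) + (A + C) * X + μ = 0 := by
  simp only [rescaledNormalFormEquilibria, Set.mem_ofPred_eq, sub_eq_zero]
  constructor <;> rintro ⟨rfl, rfl, h⟩ <;> exact ⟨rfl, rfl, by linear_combination -h⟩

theorem rescaledNormalFormEquilibria_eq_singleton {K : Type*} [Field K] [NeZero (2 : K)]
    {μ A B C : K} (hB : B ≠ 0) (hdisc : discrim B (A + C) μ = 0) :
    rescaledNormalFormEquilibria μ A B C =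
      {(-(A + C) / (2 * B), (-(A + C) / (2 * B)) ^ 2, -(A + C) / (2 * B))} := by
  ext ⟨X, Y, Z⟩
  rw [mem_rescaledNormalFormEquilibria_iff, quadratic_eq_zero_iff_of_discrim_eq_zero hB hdisc]
  simp only [Set.mem_singleton_iff, Prod.mk.injEq]
  constructor <;> rintro ⟨rfl, rfl, rfl⟩ <;> exact ⟨rfl, rfl, rfl⟩

theorem det_rescaledNormalForm_jacobian {R : Type*} [CommRing R] (A B C X : R) :
    !![-2 * X, 1, 0; -1, 0, 1; -A, -B, -C].det = -(2 * B * X + A + C) := by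
  rw [Matrix.det_fin_three]
  simp only [Matrix.of_apply, Matrix.cons_val', Matrix.cons_val_zero, Matrix.cons_val_one,
    Matrix.cons_val_two, Matrix.empty_val', Matrix.cons_val_fin_one, Matrix.head_cons,
    Matrix.tail_cons, Matrix.head_fin_const]
  ring

/-- At `μ = (A+C)²/(4B)` with `B ≠ 0`, the rescaled normal
form has a unique equilibrium `(X_e, X_e², X_e)` with `X_e = −(A+C)/(2B)`;
the Jacobian `!![−2X, 1, 0; −1, 0, 1; −A, −B, −C]` has determinant
`−(2BX + A + C)` for every `X`, and in particular the Jacobian at the unique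
equilibrium is singular: this is the saddle-node bifurcation point. -/
theorem rescaled_normal_form_saddle_node (μ A B C : ℝ) (hB : B ≠ 0)
    (hμ : μ = (A + C) ^ 2 / (4 * B)) :
    let Xe : ℝ := -(A + C) / (2 * B)
    let J : ℝ → Matrix (Fin 3) (Fin 3) ℝ :=
      fun X => !![-2 * X, 1, 0; -1, 0, 1; -A, -B, -C]
    ({p : ℝ × ℝ × ℝ | p.2.1 - p.1 ^ 2 = 0 ∧ p.2.2 - p.1 = 0 ∧
        -μ - A * p.1 - B * p.2.1 - C * p.2.2 = 0} = {(Xe, Xe ^ 2, Xe)}) ∧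
    (∀ X : ℝ, (J X).det = -(2 * B * X + A + C)) ∧
    (J Xe).det = 0 := by
  intro Xe J
  have hdisc : discrim B (A + C) μ = 0 := by
    rw [discrim, hμ]
    field_simp
    ring
  have hdet (X : ℝ) : (J X).det = -(2 * B * X + A + C) := det_rescaledNormalForm_jacobian A B C X
  refine ⟨rescaledNormalFormEquilibria_eq_singleton hB hdisc, hdet, ?_⟩
  rw [hdet, mul_div_cancel₀ _ (mul_ne_zero two_ne_zero hB)]
  ring
end

section
/- Let A, B, C, X ∈ ℝ and let J(X) be the 3×3 real matrix with rows (−2X, 1, 0), (−1, 0, 1), (−A, −B, −C). Set p = 2X + C, q = B + 2XC + 1, and r = 2XB + A + C. Then J(X) has a pair of purely imaginary nonzero complex eigenvalues if and only if p·q = r and q > 0; and in that case the eigenvalues of J(X) (over ℂ) are exactly i√q, −i√q, and −p. This characterizes the Hopf bifurcation locus of the rescaled normal form: an equilibrium (X, X², X) is a Hopf point exactly when (2X + C)(B + 2XC + 1) = 2XB + A + C and B + 2XC + 1 > 0. -/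
/-!
The characteristic polynomial of `J(X)` is `z³ + p z² + q z + r`. At `z = iω` its real
part is `r - p ω²` and its imaginary part `ω (q - ω²)`, so a nonzero purely imaginary
root forces `q = ω² > 0` and `r = p q`. Conversely, when `r = p q` the cubic factors as
`(z² + q)(z + p)`, whose roots are `±i√q` and `-p`.
-/

open Complex

theorem sq_add_ofReal_eq_zero_iff {q : ℝ} (hq : 0 ≤ q) (z : ℂ) :
    z ^ 2 + q = 0 ↔ z = I * √q ∨ z = -(I * √q) := by
  have hsq : (q : ℂ) = -(I * √q) ^ 2 := by
    rw [mul_pow, I_sq, ← ofReal_pow, Real.sq_sqrt hq]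
    ring
  rw [hsq, ← sub_eq_add_neg, sub_eq_zero, sq_eq_sq_iff_eq_or_eq_neg]

def realCubic (p q r : ℝ) (z : ℂ) : ℂ := z ^ 3 + p * z ^ 2 + q * z + r

section realCubic

variable (p q r : ℝ)

theorem realCubic_I_mul_eq_zero_iff (ω : ℝ) :
    realCubic p q r (I * ω) = 0 ↔ r = p * ω ^ 2 ∧ ω * (q - ω ^ 2) = 0 := by
  have hsplit : realCubic p q r (I * ω) =
      ((r - p * ω ^ 2 : ℝ) : ℂ) + ((ω * (q - ω ^ 2) : ℝ) : ℂ) * I := by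
    unfold realCubic
    push_cast
    linear_combination ((p : ℂ) * ω ^ 2 + (ω : ℂ) ^ 3 * I) * I_sq
  rw [hsplit, Complex.ext_iff]
  simp only [add_re, ofReal_re, mul_re, I_re, mul_zero, ofReal_im, I_im, mul_one, sub_self,
    add_zero, zero_re, add_im, mul_im, zero_add, zero_im, sub_eq_zero]

theorem realCubic_eq_mul_of_mul_eq (h : p * q = r) (z : ℂ) :
    realCubic p q r z = (z ^ 2 + q) * (z + p) := by
  unfold realCubic
  rw [← h]
  push_cast
  ring

theorem realCubic_eq_zero_iff_of_mul_eq (h : p * q = r) (hq : 0 ≤ q) (z : ℂ) :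
    realCubic p q r z = 0 ↔ z = I * √q ∨ z = -(I * √q) ∨ z = -p := by
  rw [realCubic_eq_mul_of_mul_eq p q r h, mul_eq_zero, sq_add_ofReal_eq_zero_iff hq,
    add_eq_zero_iff_eq_neg, or_assoc]

theorem exists_realCubic_imaginary_root_pair_iff :
    (∃ ω : ℝ, ω ≠ 0 ∧ realCubic p q r (I * ω) = 0 ∧ realCubic p q r (-(I * ω)) = 0) ↔
      p * q = r ∧ 0 < q := by
  constructor
  · rintro ⟨ω, hω, hroot, -⟩
    obtain ⟨hr, hq⟩ := (realCubic_I_mul_eq_zero_iff p q r ω).1 hroot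
    have hq : q = ω ^ 2 := by
      linear_combination (mul_eq_zero.1 hq).resolve_left hω
    subst hq hr
    exact ⟨rfl, by positivity⟩
  · rintro ⟨h, hq⟩
    refine ⟨√q, (Real.sqrt_pos.2 hq).ne', ?_, ?_⟩ <;>
      simp [realCubic_eq_zero_iff_of_mul_eq p q r h hq.le]

end realCubic

def rescaledJacobian (A B C x : ℝ) : Matrix (Fin 3) (Fin 3) ℝ :=
  !![-2 * x, 1, 0; -1, 0, 1; -A, -B, -C]

theorem det_scalar_sub_rescaledJacobian (A B C x : ℝ) (z : ℂ) :
    (Matrix.scalar (Fin 3) z - (rescaledJacobian A B C x).map ofReal).det =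
      realCubic (2 * x + C) (B + 2 * x * C + 1) (2 * x * B + A + C) z := by
  simp only [Matrix.scalar_apply, rescaledJacobian, neg_mul, Matrix.det_fin_three, Fin.isValue,
    Matrix.sub_apply, Matrix.diagonal_apply_eq, Matrix.map_apply, Matrix.of_apply, Matrix.cons_val',
    Matrix.cons_val_zero, Matrix.cons_val_fin_one, ofReal_neg, ofReal_mul, ofReal_ofNat,
    sub_neg_eq_add, Matrix.cons_val_one, ofReal_zero, sub_zero, Matrix.cons_val, ne_eq,
    Fin.reduceEq, not_false_eq_true, Matrix.diagonal_apply_ne, ofReal_one, zero_sub, mul_neg,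
    mul_one, neg_add_rev, zero_add, zero_ne_one, one_ne_zero, one_mul, neg_neg, sub_self,
    zero_mul, add_zero, realCubic, ofReal_add]
  ring

theorem mem_spectrum_rescaledJacobian_iff (A B C x : ℝ) (z : ℂ) :
    z ∈ spectrum ℂ ((rescaledJacobian A B C x).map ofReal) ↔
      realCubic (2 * x + C) (B + 2 * x * C + 1) (2 * x * B + A + C) z = 0 := by
  rw [Matrix.mem_spectrum_iff_isRoot_charpoly, Polynomial.IsRoot.def, Matrix.eval_charpoly,
    det_scalar_sub_rescaledJacobian]

/-- For the Jacobian `J(X) = !![−2X, 1, 0; −1, 0, 1; −A, −B, −C]`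
of the rescaled normal form, with `p = 2X + C`, `q = B + 2XC + 1`,
`r = 2XB + A + C`: `J(X)` has a pair of purely imaginary nonzero complex
eigenvalues iff `p q = r` and `q > 0`, and in that case its eigenvalues over
`ℂ` are exactly `i√q`, `−i√q` and `−p`.  This characterizes the Hopf
bifurcation locus of the rescaled normal form. -/
theorem rescaled_normal_form_hopf_locus (A B C x : ℝ) :
    let Jc : Matrix (Fin 3) (Fin 3) ℂ :=
      (!![-2 * x, 1, 0; -1, 0, 1; -A, -B, -C] : Matrix (Fin 3) (Fin 3) ℝ).map
        Complex.ofReal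
    let p : ℝ := 2 * x + C
    let q : ℝ := B + 2 * x * C + 1
    let r : ℝ := 2 * x * B + A + C
    ((∃ ω : ℝ, ω ≠ 0 ∧ Complex.I * (ω : ℂ) ∈ spectrum ℂ Jc ∧
        -(Complex.I * (ω : ℂ)) ∈ spectrum ℂ Jc) ↔ (p * q = r ∧ 0 < q)) ∧
    (p * q = r → 0 < q →
      spectrum ℂ Jc = {Complex.I * (Real.sqrt q : ℂ),
        -(Complex.I * (Real.sqrt q : ℂ)), -(p : ℂ)}) := by
  intro Jc p q r
  have hspec (z : ℂ) : z ∈ spectrum ℂ Jc ↔ realCubic p q r z = 0 :=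
    mem_spectrum_rescaledJacobian_iff A B C x z
  refine ⟨?_, fun hpq hq => ?_⟩
  · simp only [hspec]
    exact exists_realCubic_imaginary_root_pair_iff p q r
  · ext z
    rw [hspec, realCubic_eq_zero_iff_of_mul_eq p q r hpq hq.le]
    rfl
end

section
/- Let B, C ∈ ℝ and set A = C(B − 1) and μ = B C²/4 (the zero-Hopf bifurcation point). Then the point (X_e, X_e², X_e) with X_e = −C/2 is an equilibrium of the rescaled normal form X' = Y − X², Y' = Z − X, Z' = −μ − A X − B Y − C Z, and the characteristic polynomial of the Jacobian matrix there equals λ³ + (1 + B − C²) λ. Consequently, if 1 + B − C² > 0, the Jacobian at this equilibrium has the eigenvalues 0, i√(1 + B − C²), and −i√(1 + B − C²): a zero eigenvalue together with a purely imaginary conjugate pair. -/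
/-!
At the zero-Hopf point the equilibrium `X_e = -C/2` kills both the `λ²` coefficient `C + 2X_e` and
the constant coefficient `A + C + 2X_e B` of the characteristic polynomial of the Jacobian, leaving
`λ³ + ω²λ = λ(λ - iω)(λ + iω)` with `ω² = 1 + B - C²`.
-/

open Polynomial

def rescaledNormalFormJacobian {R : Type*} [CommRing R] (a b c x : R) : Matrix (Fin 3) (Fin 3) R :=
  !![-2 * x, 1, 0; -1, 0, 1; -a, -b, -c]

theorem charpoly_rescaledNormalFormJacobian {R : Type*} [CommRing R] (a b c x : R) :
    (rescaledNormalFormJacobian a b c x).charpoly =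
      X ^ 3 + C (c + 2 * x) * X ^ 2 + C (1 + b + 2 * x * c) * X + C (a + c + 2 * x * b) := by
  rw [Matrix.charpoly, Matrix.det_fin_three]
  simp only [rescaledNormalFormJacobian, neg_mul, Fin.isValue, Matrix.charmatrix_apply_eq,
    Matrix.of_apply, Matrix.cons_val', Matrix.cons_val_zero, Matrix.cons_val_fin_one, map_neg,
    map_mul, sub_neg_eq_add, Matrix.cons_val_one, map_zero, sub_zero, Matrix.cons_val, ne_eq,
    Fin.reduceEq, not_false_eq_true, Matrix.charmatrix_apply_ne, map_one, mul_neg, mul_one,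
    neg_add_rev, neg_neg, zero_ne_one, one_ne_zero, one_mul, neg_zero, zero_mul, add_zero, map_add]
  ring

theorem charpoly_rescaledNormalFormJacobian_zeroHopf (b c : ℝ) :
    (rescaledNormalFormJacobian (c * (b - 1)) b c (-c / 2)).charpoly =
      X ^ 3 + C (1 + b - c ^ 2) * X := by
  rw [charpoly_rescaledNormalFormJacobian]
  have quadratic_coeff : c + 2 * (-c / 2) = 0 := by ring
  have linear_coeff : 1 + b + 2 * (-c / 2) * c = 1 + b - c ^ 2 := by ring
  have constant_coeff : c * (b - 1) + c + 2 * (-c / 2) * b = 0 := by ring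
  rw [quadratic_coeff, linear_coeff, constant_coeff]
  simp

theorem Matrix.spectrum_map_ofReal_of_charpoly_eq_X_pow_three_add {n : Type*} [Fintype n]
    [DecidableEq n] {M : Matrix n n ℝ} {ω : ℝ} (hM : M.charpoly = X ^ 3 + C (ω ^ 2) * X) :
    spectrum ℂ (M.map Complex.ofReal) = {0, Complex.I * ω, -(Complex.I * ω)} := by
  ext z
  have factor : z ^ 3 + (ω : ℂ) ^ 2 * z = z * (z - Complex.I * ω) * (z + Complex.I * ω) := by
    linear_combination (z * (ω : ℂ) ^ 2) * Complex.I_sq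
  rw [Matrix.mem_spectrum_iff_isRoot_charpoly,
    show M.map Complex.ofReal = M.map Complex.ofRealHom from rfl, Matrix.charpoly_map, hM]
  simp only [Polynomial.map_add, Polynomial.map_pow, Polynomial.map_mul, map_X, map_C, IsRoot,
    Complex.ofRealHom_eq_coe, eval_add, eval_pow, eval_mul, eval_X, eval_C, Complex.ofReal_pow,
    factor, mul_eq_zero, sub_eq_zero, add_eq_zero_iff_eq_neg, Set.mem_insert_iff,
    Set.mem_singleton_iff, or_assoc]

/-- At the zero-Hopf bifurcation point `A = C(B − 1)`,
`μ = B C²/4`, the point `(X_e, X_e², X_e)` with `X_e = −C/2` is an equilibrium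
of the rescaled normal form, the characteristic polynomial of the Jacobian
there is `λ³ + (1 + B − C²) λ`, and if `1 + B − C² > 0` the Jacobian has the
eigenvalues `0`, `i√(1 + B − C²)` and `−i√(1 + B − C²)`. -/
theorem rescaled_normal_form_zero_hopf (B C : ℝ) :
    let A : ℝ := C * (B - 1)
    let μ : ℝ := B * C ^ 2 / 4
    let Xe : ℝ := -C / 2
    let J : Matrix (Fin 3) (Fin 3) ℝ := !![-2 * Xe, 1, 0; -1, 0, 1; -A, -B, -C]
    (Xe ^ 2 - Xe ^ 2 = 0 ∧ Xe - Xe = 0 ∧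
      -μ - A * Xe - B * Xe ^ 2 - C * Xe = 0) ∧
    J.charpoly = Polynomial.X ^ 3 + Polynomial.C (1 + B - C ^ 2) * Polynomial.X ∧
    (0 < 1 + B - C ^ 2 →
      spectrum ℂ (J.map Complex.ofReal) =
        {0, Complex.I * (Real.sqrt (1 + B - C ^ 2) : ℂ),
          -(Complex.I * (Real.sqrt (1 + B - C ^ 2) : ℂ))}) := by
  intro A μ Xe J
  have hcharpoly : J.charpoly = Polynomial.X ^ 3 + Polynomial.C (1 + B - C ^ 2) * Polynomial.X :=
    charpoly_rescaledNormalFormJacobian_zeroHopf B C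
  have equilibrium : -μ - A * Xe - B * Xe ^ 2 - C * Xe = 0 := by
    simp only [μ, A, Xe]
    ring
  refine ⟨⟨sub_self _, sub_self _, equilibrium⟩, hcharpoly, fun hpos => ?_⟩
  apply Matrix.spectrum_map_ofReal_of_charpoly_eq_X_pow_three_add
  rwa [Real.sq_sqrt hpos.le]
end

section
/- Let a, c ∈ ℝ and set μ = 0 and b = −a² − a c (so that a² + a c + b = 0). Then the parabola {(x, z) ∈ ℝ² : z = a x²} is invariant under the desingularized slow flow x' = z − x, z' = −2x(μ + a x + b x² + c z): for every differentiable solution (x, z) : J → ℝ² of this system on an interval J with z(t₀) = a x(t₀)² at some t₀ ∈ J, one has z(t) = a x(t)² for all t ∈ J. -/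
/-!
Along a solution, the defect `w = z - a x²` from the parabola satisfies
`w' = -2x(a x + b x² + c z) - 2a x (z - x) = -2(a + c) x · w` precisely because `μ = 0` and
`a² + a c + b = 0`. A scalar linear equation with continuous coefficient has, by Grönwall,
`w ≡ 0` as its only solution on an interval vanishing at one point.
-/

open Set NNReal

section LinearODE

variable {E : Type*} [NormedAddCommGroup E] [NormedSpace ℝ E]
  {k : ℝ → ℝ} {w : ℝ → E} {a b : ℝ}

lemma exists_forall_lipschitzWith_smul_of_continuousOn (hk : ContinuousOn k (Icc a b)) :
    ∃ K : ℝ≥0, ∀ t ∈ Icc a b, LipschitzWith K fun y : E ↦ k t • y := by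
  obtain ⟨C, hC⟩ := isCompact_Icc.exists_bound_of_continuousOn hk
  refine ⟨C.toNNReal, fun t ht ↦ (lipschitzWith_smul (k t)).weaken ?_⟩
  simpa only [norm_toNNReal] using Real.toNNReal_le_toNNReal (hC t ht)

lemma eqOn_zero_of_hasDerivWithinAt_smul_of_left (hk : ContinuousOn k (Icc a b))
    (hw : ∀ t ∈ Icc a b, HasDerivWithinAt w (k t • w t) (Icc a b) t) (ha : w a = 0) :
    EqOn w 0 (Icc a b) := by
  obtain ⟨K, hK⟩ := exists_forall_lipschitzWith_smul_of_continuousOn (E := E) hk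
  refine ODE_solution_unique_of_mem_Icc_right (v := fun t y ↦ k t • y) (s := fun _ ↦ univ)
    (fun t ht ↦ (hK t (Ico_subset_Icc_self ht)).lipschitzOnWith)
    (fun t ht ↦ (hw t ht).continuousWithinAt)
    (fun t ht ↦ (hw t (Ico_subset_Icc_self ht)).mono_of_mem_nhdsWithin
      (Icc_mem_nhdsGE_of_mem ht))
    (fun _ _ ↦ trivial) continuousOn_const
    (fun t _ ↦ by rw [Pi.zero_apply, smul_zero]; exact hasDerivWithinAt_const t (Ici t) 0)
    (fun _ _ ↦ trivial) ha

lemma eqOn_zero_of_hasDerivWithinAt_smul_of_right (hk : ContinuousOn k (Icc a b))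
    (hw : ∀ t ∈ Icc a b, HasDerivWithinAt w (k t • w t) (Icc a b) t) (hb : w b = 0) :
    EqOn w 0 (Icc a b) := by
  obtain ⟨K, hK⟩ := exists_forall_lipschitzWith_smul_of_continuousOn (E := E) hk
  refine ODE_solution_unique_of_mem_Icc_left (v := fun t y ↦ k t • y) (s := fun _ ↦ univ)
    (fun t ht ↦ (hK t (Ioc_subset_Icc_self ht)).lipschitzOnWith)
    (fun t ht ↦ (hw t ht).continuousWithinAt)
    (fun t ht ↦ (hw t (Ioc_subset_Icc_self ht)).mono_of_mem_nhdsWithin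
      (Icc_mem_nhdsLE_of_mem ht))
    (fun _ _ ↦ trivial) continuousOn_const
    (fun t _ ↦ by rw [Pi.zero_apply, smul_zero]; exact hasDerivWithinAt_const t (Iic t) 0)
    (fun _ _ ↦ trivial) hb

theorem Set.OrdConnected.eqOn_zero_of_hasDerivWithinAt_smul {J : Set ℝ} (hJ : J.OrdConnected)
    (hk : ContinuousOn k J) (hw : ∀ t ∈ J, HasDerivWithinAt w (k t • w t) J t) {t₀ : ℝ}
    (ht₀ : t₀ ∈ J) (h₀ : w t₀ = 0) : EqOn w 0 J := by
  have restrict : ∀ {a b}, a ∈ J → b ∈ J →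
      ∀ t ∈ Icc a b, HasDerivWithinAt w (k t • w t) (Icc a b) t :=
    fun ha hb t ht ↦ (hw t (hJ.out ha hb ht)).mono (hJ.out ha hb)
  intro t ht
  rcases le_total t₀ t with h | h
  · exact eqOn_zero_of_hasDerivWithinAt_smul_of_left (hk.mono (hJ.out ht₀ ht))
      (restrict ht₀ ht) h₀ (right_mem_Icc.2 h)
  · exact eqOn_zero_of_hasDerivWithinAt_smul_of_right (hk.mono (hJ.out ht ht₀))
      (restrict ht ht₀) h₀ (left_mem_Icc.2 h)

end LinearODE

/-- For `μ = 0` and `b = −a² − ac` (i.e. `a² + ac + b = 0`),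
the parabola `z = a x²` is invariant under the desingularized slow flow
`x' = z − x, z' = −2x(μ + a x + b x² + c z)`: any solution on an interval
touching the parabola stays on it. -/
theorem desingularized_slow_flow_invariant_parabola
    (a c : ℝ) (J : Set ℝ) (hJconn : J.OrdConnected)
    (x z : ℝ → ℝ)
    (hx : ∀ t ∈ J, HasDerivWithinAt x (z t - x t) J t)
    (hz : ∀ t ∈ J, HasDerivWithinAt z
      (-2 * x t * ((0 : ℝ) + a * x t + (-a ^ 2 - a * c) * (x t) ^ 2 + c * z t)) J t)
    (t₀ : ℝ) (ht₀ : t₀ ∈ J) (hinit : z t₀ = a * (x t₀) ^ 2) :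
    ∀ t ∈ J, z t = a * (x t) ^ 2 := by
  have defect_deriv : ∀ t ∈ J, HasDerivWithinAt (fun t ↦ z t - a * x t ^ 2)
      (-2 * (a + c) * x t * (z t - a * x t ^ 2)) J t := by
    intro t ht
    exact ((hz t ht).sub (((hx t ht).pow 2).const_mul a)).congr_deriv (by ring)
  have coeff_cont : ContinuousOn (fun t ↦ -2 * (a + c) * x t) J :=
    continuousOn_const.mul fun t ht ↦ (hx t ht).continuousWithinAt
  exact fun t ht ↦ sub_eq_zero.1 <|
    hJconn.eqOn_zero_of_hasDerivWithinAt_smul coeff_cont defect_deriv ht₀ (sub_eq_zero.2 hinit) ht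
end

section
/- Let ε₁ > 0, ε₂ > 0, k < 0 and λ ∈ ℝ. Then there exist an invertible affine map T : ℝ³ → ℝ³, a real constant β ≠ 0, and parameters ε > 0 and μ, a, b, c ∈ ℝ, such that for every differentiable solution u : ℝ → ℝ³ of the Koper system ε₁ ẋ = k y − x³ + 3x − λ, ẏ = x − 2y + z, ż = ε₂ (y − z), the function s ↦ T(u(β s)) is a solution of the cubic singular Hopf normal form ẋ = (y − x² − x³)/ε, ẏ = z − x, ż = −μ − a x − b y − c z. In other words, the Koper vector field can be transformed into the cubic singular Hopf normal form by an affine coordinate change and a time rescaling. -/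
/-!
Put x = 1 + 3X, so that the fold x = 1 of the cubic moves to the origin and
x³ − 3x + 2 = 27(X² + X³), and set Y = (k y + 2 − λ)/27, Z = (2y − z − 1)/3 and t = −9s/k.
Then X′ = (Y − X² − X³)/ε with ε = −k ε₁/81 > 0, Y′ = Z − X, and Z′ is affine in (X, Y, Z).
An affine map carries solutions of one field to solutions of another as soon as the two fields
are related by its (time-scaled) linear part, which here is a polynomial identity.
-/

section AffineConjugacy

variable {E F : Type*} [NormedAddCommGroup E] [NormedSpace ℝ E] [FiniteDimensional ℝ E]
  [NormedAddCommGroup F] [NormedSpace ℝ F]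

theorem AffineMap.hasDerivAt_comp (T : E →ᵃ[ℝ] F) {v : ℝ → E} {v' : E} {t : ℝ}
    (hv : HasDerivAt v v' t) : HasDerivAt (fun s => T (v s)) (T.linear v') t := by
  rw [T.decomp]
  exact (T.linear.toContinuousLinearMap.hasFDerivAt.comp_hasDerivAt t hv).add_const (T 0)

theorem AffineMap.hasDerivAt_comp_mul_of_related (T : E →ᵃ[ℝ] F) {f : E → E} {g : F → F}
    {β : ℝ} (hfg : ∀ p, β • T.linear (f p) = g (T p)) {u : ℝ → E}
    (hu : ∀ t, HasDerivAt u (f (u t)) t) (s : ℝ) :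
    HasDerivAt (fun s => T (u (β * s))) (g (T (u (β * s)))) s := by
  have hrescaled : HasDerivAt (fun s => u (β * s)) (β • f (u (β * s))) s :=
    (hu (β * s)).scomp s (hasDerivAt_const_mul β)
  simpa only [map_smul, hfg] using T.hasDerivAt_comp hrescaled

end AffineConjugacy

noncomputable def koperLinear (k : ℝ) (hk : k ≠ 0) : (ℝ × ℝ × ℝ) ≃ₗ[ℝ] (ℝ × ℝ × ℝ) where
  toFun p := (p.1 / 3, k * p.2.1 / 27, (2 * p.2.1 - p.2.2) / 3)
  invFun q := (3 * q.1, 27 * q.2.1 / k, 2 * (27 * q.2.1 / k) - 3 * q.2.2)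
  map_add' p q := by ext <;> simp only [Prod.fst_add, Prod.snd_add] <;> ring
  map_smul' r p := by
    ext <;> simp only [Prod.smul_fst, Prod.smul_snd, smul_eq_mul, RingHom.id_apply] <;> ring
  left_inv p := by
    ext <;> field_simp
    ring
  right_inv q := by
    ext <;> field_simp
    ring

noncomputable def koperCoordChange (k lam : ℝ) (hk : k ≠ 0) : (ℝ × ℝ × ℝ) ≃ᵃ[ℝ] (ℝ × ℝ × ℝ) :=
  (koperLinear k hk).toAffineEquiv.trans
    (AffineEquiv.constVAdd ℝ _ (-1 / 3, (2 - lam) / 27, -1 / 3))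

theorem koperCoordChange_linear (k lam : ℝ) (hk : k ≠ 0) :
    (koperCoordChange k lam hk).linear = koperLinear k hk := rfl

theorem koperCoordChange_apply (k lam : ℝ) (hk : k ≠ 0) (p : ℝ × ℝ × ℝ) :
    koperCoordChange k lam hk p = (-1 / 3, (2 - lam) / 27, -1 / 3) + koperLinear k hk p := rfl

noncomputable def koperField (ε₁ ε₂ k lam : ℝ) (p : ℝ × ℝ × ℝ) : ℝ × ℝ × ℝ :=
  ((k * p.2.1 - p.1 ^ 3 + 3 * p.1 - lam) / ε₁, p.1 - 2 * p.2.1 + p.2.2, ε₂ * (p.2.1 - p.2.2))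

noncomputable def cubicHopfField (ε μ a b c : ℝ) (q : ℝ × ℝ × ℝ) : ℝ × ℝ × ℝ :=
  ((q.2.1 - q.1 ^ 2 - q.1 ^ 3) / ε, q.2.2 - q.1, -μ - a * q.1 - b * q.2.1 - c * q.2.2)

theorem koperField_related_cubicHopfField (ε₁ ε₂ k lam : ℝ) (hk : k ≠ 0) (p : ℝ × ℝ × ℝ) :
    (-9 / k) • (koperCoordChange k lam hk).linear (koperField ε₁ ε₂ k lam p) =
      cubicHopfField (ε₁ * (-k) / 81) (3 * ε₂ * (lam - 2) / k ^ 2 - 3 * ε₂ / k) (18 / k)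
        (81 * ε₂ / k ^ 2) (-9 * (2 + ε₂) / k) (koperCoordChange k lam hk p) := by
  simp only [koperCoordChange_linear, koperCoordChange_apply, koperLinear, koperField,
    cubicHopfField, LinearEquiv.coe_mk, LinearMap.coe_mk, AddHom.coe_mk, Prod.smul_mk, smul_eq_mul,
    Prod.mk_add_mk]
  ext <;> field_simp <;> ring

theorem koper_to_cubic_singular_hopf_general
    (ε₁ ε₂ k lam : ℝ) (hε₁ : 0 < ε₁) (hk : k < 0) :
    ∃ (T : (ℝ × ℝ × ℝ) ≃ᵃ[ℝ] (ℝ × ℝ × ℝ)) (β : ℝ), β ≠ 0 ∧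
      ∃ (ε μ a b c : ℝ), 0 < ε ∧
        ∀ u : ℝ → ℝ × ℝ × ℝ,
          (∀ t, HasDerivAt u
            ((k * (u t).2.1 - (u t).1 ^ 3 + 3 * (u t).1 - lam) / ε₁,
              (u t).1 - 2 * (u t).2.1 + (u t).2.2,
              ε₂ * ((u t).2.1 - (u t).2.2)) t) →
          ∀ s, HasDerivAt (fun s => T (u (β * s)))
            (((T (u (β * s))).2.1 - (T (u (β * s))).1 ^ 2
                - (T (u (β * s))).1 ^ 3) / ε,
              (T (u (β * s))).2.2 - (T (u (β * s))).1,
              -μ - a * (T (u (β * s))).1 - b * (T (u (β * s))).2.1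
                - c * (T (u (β * s))).2.2) s := by
  refine ⟨koperCoordChange k lam hk.ne, -9 / k, div_ne_zero (by norm_num) hk.ne, ε₁ * (-k) / 81,
    _, _, _, _, ?_, fun u hu s =>
      (koperCoordChange k lam hk.ne).toAffineMap.hasDerivAt_comp_mul_of_related
        (koperField_related_cubicHopfField ε₁ ε₂ k lam hk.ne) hu s⟩
  exact div_pos (mul_pos hε₁ (neg_pos.mpr hk)) (by norm_num)

/-- The Koper system
`ε₁ ẋ = k y − x³ + 3x − λ, ẏ = x − 2y + z, ż = ε₂(y − z)` (with
`ε₁, ε₂ > 0`, `k < 0`) can be transformed into the cubic singular Hopf normal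
form `ẋ = (y − x² − x³)/ε, ẏ = z − x, ż = −μ − a x − b y − c z` by an
invertible affine coordinate change `T` and a time rescaling `t = β s`. -/
theorem koper_to_cubic_singular_hopf
    (ε₁ ε₂ k lam : ℝ) (hε₁ : 0 < ε₁) (hε₂ : 0 < ε₂) (hk : k < 0) :
    ∃ (T : (ℝ × ℝ × ℝ) ≃ᵃ[ℝ] (ℝ × ℝ × ℝ)) (β : ℝ), β ≠ 0 ∧
      ∃ (ε μ a b c : ℝ), 0 < ε ∧
        ∀ u : ℝ → ℝ × ℝ × ℝ,
          (∀ t, HasDerivAt u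
            ((k * (u t).2.1 - (u t).1 ^ 3 + 3 * (u t).1 - lam) / ε₁,
              (u t).1 - 2 * (u t).2.1 + (u t).2.2,
              ε₂ * ((u t).2.1 - (u t).2.2)) t) →
          ∀ s, HasDerivAt (fun s => T (u (β * s)))
            (((T (u (β * s))).2.1 - (T (u (β * s))).1 ^ 2
                - (T (u (β * s))).1 ^ 3) / ε,
              (T (u (β * s))).2.2 - (T (u (β * s))).1,
              -μ - a * (T (u (β * s))).1 - b * (T (u (β * s))).2.1
                - c * (T (u (β * s))).2.2) s :=
  koper_to_cubic_singular_hopf_general ε₁ ε₂ k lam hε₁ hk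
end
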